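/- Corollary 4 (second domain adaptation bound specialized to linear classifiers): for any source domain S and target domain T over ℝ^d×{−1,+1} whose marginals satisfy x ≠ 0 almost surely, and for every w ∈ ℝ^d, R_T(h_w) ≤ d_{T_X}(ρ_w) + 2·β_∞·e_S(ρ_w) + 2·η_{T∖S}. -/

import Mathlib

/-! The Gaussian `γ_w` is invariant under the reflection `u ↦ 2w - u`, and `h_w(x)` always agrees
with `h_u(x)` or with `h_{2w-u}(x)`; hence `R_T(h_w)` is at most twice the Gibbs risk of `ρ_w`.
For labels, `ℓ(a,y) + ℓ(b,y) = ℓ(a,b) + 2 ℓ(a,y) ℓ(b,y)`, so twice the Gibbs risk is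
`d_{T_X}(ρ_w) + 2 e_T(ρ_w)`. Splitting `T = T_⊥ + S.withDensity (dT/dS)` and bounding
`dT/dS ≤ β_∞` `S`-a.e. gives `e_T(ρ_w) ≤ η_{T∖S} + β_∞ e_S(ρ_w)`, using `ℓ ℓ' ≤ ℓ` on `T_⊥`. -/

open MeasureTheory

noncomputable section

/-- The 0-1 loss on labels in `{−1,+1}`, encoded by `Bool` (`false ↦ −1`, `true ↦ +1`). -/
def l01 (a b : Bool) : ℝ := if a = b then 0 else 1

/-- The real value of a label: `true ↦ +1`, `false ↦ −1`. -/
def yval (b : Bool) : ℝ := if b then 1 else -1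

variable {d : ℕ}

/-- Dot product on `ℝ^d`. -/
def dotp (w x : Fin d → ℝ) : ℝ := ∑ i, w i * x i

/-- Euclidean norm on `ℝ^d`. -/
def nrm (x : Fin d → ℝ) : ℝ := Real.sqrt (∑ i, x i ^ 2)

open Classical in
/-- The linear classifier `h_w(x) = sign(w·x)` (`true ↦ +1`, `false ↦ −1`). -/
def hlin (w x : Fin d → ℝ) : Bool := if 0 < dotp w x then true else false

/-- The Gaussian measure `γ_w` on `ℝ^d` with mean `w` and identity covariance, given as the
product over coordinates of one-dimensional Gaussians `N(w_i, 1)`. -/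
def gauss (w : Fin d → ℝ) : Measure (Fin d → ℝ) :=
  Measure.pi fun i => ProbabilityTheory.gaussianReal (w i) 1

/-- The standard Gaussian tail function `Φ(z) = (1/√(2π)) ∫_z^∞ e^{−t²/2} dt`. -/
def gaussTail (z : ℝ) : ℝ :=
  ∫ t in Set.Ici z, Real.exp (-t ^ 2 / 2) / Real.sqrt (2 * Real.pi)

/-- The risk `R_P(h_w)` of the linear classifier `h_w` on a domain `P`. -/
def riskLin (P : Measure ((Fin d → ℝ) × Bool)) (w : Fin d → ℝ) : ℝ :=
  ∫ z, l01 (hlin w z.1) z.2 ∂P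

/-- The Gibbs risk `R_P(G_{ρ_w}) = E_{w'~γ_w} E_{(x,y)~P} ℓ(h_{w'}(x),y)`. -/
def gibbsLin (P : Measure ((Fin d → ℝ) × Bool)) (w : Fin d → ℝ) : ℝ :=
  ∫ w', ∫ z, l01 (hlin w' z.1) z.2 ∂P ∂(gauss w)

/-- The expected disagreement `d_{D_X}(ρ_w) = E_{(u,v)~γ_w⊗γ_w} E_{x~D_X} ℓ(h_u(x),h_v(x))`. -/
def expDisagLin (D : Measure (Fin d → ℝ)) (w : Fin d → ℝ) : ℝ :=
  ∫ p, ∫ x, l01 (hlin p.1 x) (hlin p.2 x) ∂D ∂((gauss w).prod (gauss w))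

/-- The expected joint error
`e_P(ρ_w) = E_{(u,v)~γ_w⊗γ_w} E_{(x,y)~P} ℓ(h_u(x),y)·ℓ(h_v(x),y)`. -/
def jointErrLin (P : Measure ((Fin d → ℝ) × Bool)) (w : Fin d → ℝ) : ℝ :=
  ∫ p, ∫ z, l01 (hlin p.1 z.1) z.2 * l01 (hlin p.2 z.1) z.2 ∂P ∂((gauss w).prod (gauss w))

/-- `β_∞`: the `S`-essential supremum of the Radon–Nikodym derivative `dT_A/dS`. -/
def betaInf {d : ℕ} (S T : Measure ((Fin d → ℝ) × Bool)) : ℝ :=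
  (essSup (T.rnDeriv S) S).toReal

/-- `η_{T∖S} = sup_{w'∈ℝ^d} ∫ ℓ(h_{w'}(x),y) dT_⊥(x,y)`, where `T_⊥ = T.singularPart S`. -/
def etaTS {d : ℕ} (S T : Measure ((Fin d → ℝ) × Bool)) : ℝ :=
  ⨆ w' : Fin d → ℝ, ∫ z, l01 (hlin w' z.1) z.2 ∂(T.singularPart S)

open ProbabilityTheory

def lossLin (u : Fin d → ℝ) (z : (Fin d → ℝ) × Bool) : ℝ := l01 (hlin u z.1) z.2

lemma l01_nonneg (a b : Bool) : 0 ≤ l01 a b := by unfold l01; split <;> norm_num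

lemma l01_le_one (a b : Bool) : l01 a b ≤ 1 := by unfold l01; split <;> norm_num

lemma l01_add_l01 (a b y : Bool) : l01 a y + l01 b y = l01 a b + 2 * (l01 a y * l01 b y) := by
  cases a <;> cases b <;> cases y <;> norm_num [l01]

lemma lossLin_nonneg (u : Fin d → ℝ) (z : (Fin d → ℝ) × Bool) : 0 ≤ lossLin u z := l01_nonneg _ _

lemma lossLin_le_one (u : Fin d → ℝ) (z : (Fin d → ℝ) × Bool) : lossLin u z ≤ 1 := l01_le_one _ _

lemma hlin_eq_decide (w x : Fin d → ℝ) : hlin w x = decide (0 < dotp w x) := by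
  unfold hlin; split <;> simp_all

lemma dotp_reflect (w u x : Fin d → ℝ) :
    dotp (fun i => 2 * w i - u i) x = 2 * dotp w x - dotp u x := by
  simp only [dotp, Finset.mul_sum, ← Finset.sum_sub_distrib]
  exact Finset.sum_congr rfl fun i _ => by ring

lemma hlin_eq_or_eq_reflect (w u x : Fin d → ℝ) :
    hlin w x = hlin u x ∨ hlin w x = hlin (fun i => 2 * w i - u i) x := by
  simp only [hlin_eq_decide, dotp_reflect, decide_eq_decide]
  by_cases h : 0 < dotp w x <;> by_cases h' : 0 < dotp u x
  all_goals first | left; tauto | right; constructor <;> intro <;> linarith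

@[fun_prop]
lemma measurable_hlin : Measurable fun q : (Fin d → ℝ) × (Fin d → ℝ) => hlin q.1 q.2 := by
  unfold hlin dotp
  exact Measurable.ite (measurableSet_lt measurable_const (by fun_prop)) measurable_const
    measurable_const

@[fun_prop]
lemma measurable_l01 : Measurable fun q : Bool × Bool => l01 q.1 q.2 := measurable_of_countable _

@[fun_prop]
lemma measurable_lossLin :
    Measurable fun q : (Fin d → ℝ) × ((Fin d → ℝ) × Bool) => lossLin q.1 q.2 := by
  unfold lossLin; fun_prop

lemma integrable_of_nonneg_of_le {α : Type*} [MeasurableSpace α] {μ : Measure α}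
    [IsFiniteMeasure μ] {f : α → ℝ} {C : ℝ} (hf : Measurable f) (h0 : ∀ x, 0 ≤ f x)
    (hC : ∀ x, f x ≤ C) : Integrable f μ :=
  .of_bound hf.aestronglyMeasurable C (ae_of_all _ fun x => by
    rw [Real.norm_of_nonneg (h0 x)]; exact hC x)

instance isProbabilityMeasure_gauss (w : Fin d → ℝ) : IsProbabilityMeasure (gauss w) := by
  unfold gauss; infer_instance

lemma measurePreserving_gauss_reflect (w : Fin d → ℝ) :
    MeasurePreserving (fun u i => 2 * w i - u i) (gauss w) (gauss w) :=
  measurePreserving_pi _ _ fun i =>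
    ⟨by fun_prop, by rw [gaussianReal_map_const_sub]; ring_nf⟩

lemma integrable_lossLin (P : Measure ((Fin d → ℝ) × Bool)) [IsFiniteMeasure P]
    (u : Fin d → ℝ) : Integrable (lossLin u) P :=
  integrable_of_nonneg_of_le (by fun_prop) (lossLin_nonneg u) (lossLin_le_one u)

lemma integrable_lossLin_mul_lossLin (P : Measure ((Fin d → ℝ) × Bool)) [IsFiniteMeasure P]
    (u v : Fin d → ℝ) : Integrable (fun z => lossLin u z * lossLin v z) P :=
  integrable_of_nonneg_of_le (by fun_prop)
    (fun _ => mul_nonneg (lossLin_nonneg _ _) (lossLin_nonneg _ _))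
    (fun _ => mul_le_one₀ (lossLin_le_one _ _) (lossLin_nonneg _ _) (lossLin_le_one _ _))

lemma lossLin_le_two_mul_integral_gauss (w : Fin d → ℝ) (z : (Fin d → ℝ) × Bool) :
    lossLin w z ≤ 2 * ∫ u, lossLin u z ∂gauss w := by
  have hσ := measurePreserving_gauss_reflect w
  have hint : Integrable (fun u => lossLin u z) (gauss w) :=
    integrable_of_nonneg_of_le (by fun_prop) (lossLin_nonneg · z) (lossLin_le_one · z)
  have hint_reflect : Integrable (fun u => lossLin (fun i => 2 * w i - u i) z) (gauss w) :=
    hσ.integrable_comp_of_integrable hint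
  have hle : ∀ u, lossLin w z ≤ lossLin u z + lossLin (fun i => 2 * w i - u i) z := fun u => by
    rcases hlin_eq_or_eq_reflect w u z.1 with h | h <;>
      simp only [lossLin, h, le_add_iff_nonneg_left, le_add_iff_nonneg_right, l01_nonneg]
  calc lossLin w z = ∫ _, lossLin w z ∂gauss w := by simp
    _ ≤ ∫ u, (lossLin u z + lossLin (fun i => 2 * w i - u i) z) ∂gauss w :=
      integral_mono (integrable_const _) (hint.add hint_reflect) hle
    _ = 2 * ∫ u, lossLin u z ∂gauss w := by
      have hrefl : ∫ u, lossLin (fun i => 2 * w i - u i) z ∂gauss w =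
          ∫ u, lossLin u z ∂gauss w := by
        conv_rhs => rw [← hσ.map_eq]
        exact (integral_map hσ.aemeasurable (f := fun u => lossLin u z) (by fun_prop)).symm
      rw [integral_add hint hint_reflect, hrefl, two_mul]

lemma riskLin_le_two_mul_gibbsLin (P : Measure ((Fin d → ℝ) × Bool)) [IsFiniteMeasure P]
    (w : Fin d → ℝ) : riskLin P w ≤ 2 * gibbsLin P w := by
  have hint : Integrable (fun q : ((Fin d → ℝ) × Bool) × (Fin d → ℝ) => lossLin q.2 q.1)
      (P.prod (gauss w)) :=
    integrable_of_nonneg_of_le (by fun_prop) (fun _ => lossLin_nonneg _ _)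
      (fun _ => lossLin_le_one _ _)
  calc riskLin P w ≤ ∫ z, 2 * ∫ u, lossLin u z ∂gauss w ∂P :=
        integral_mono (integrable_lossLin P w) (hint.integral_prod_left.const_mul 2)
          (lossLin_le_two_mul_integral_gauss w)
    _ = 2 * gibbsLin P w := by
      rw [integral_const_mul, integral_integral_swap hint]; rfl

lemma integrable_prod_lossLin_mul_lossLin
    (μ : Measure (((Fin d → ℝ) × (Fin d → ℝ)) × ((Fin d → ℝ) × Bool))) [IsFiniteMeasure μ] :
    Integrable (fun q => lossLin q.1.1 q.2 * lossLin q.1.2 q.2) μ :=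
  integrable_of_nonneg_of_le (by fun_prop)
    (fun _ => mul_nonneg (lossLin_nonneg _ _) (lossLin_nonneg _ _))
    (fun _ => mul_le_one₀ (lossLin_le_one _ _) (lossLin_nonneg _ _) (lossLin_le_one _ _))

lemma integrable_l01_hlin_hlin
    (μ : Measure (((Fin d → ℝ) × (Fin d → ℝ)) × ((Fin d → ℝ) × Bool))) [IsFiniteMeasure μ] :
    Integrable (fun q => l01 (hlin q.1.1 q.2.1) (hlin q.1.2 q.2.1)) μ :=
  integrable_of_nonneg_of_le (by fun_prop) (fun _ => l01_nonneg _ _) (fun _ => l01_le_one _ _)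

section GibbsDecomposition

variable (P : Measure ((Fin d → ℝ) × Bool)) [IsFiniteMeasure P] (w : Fin d → ℝ)

lemma two_mul_gibbsLin_eq_integral :
    2 * gibbsLin P w =
      ∫ q, (lossLin q.1.1 q.2 + lossLin q.1.2 q.2) ∂((gauss w).prod (gauss w)).prod P := by
  have hint₁ : Integrable (fun q : ((Fin d → ℝ) × (Fin d → ℝ)) × ((Fin d → ℝ) × Bool) =>
      lossLin q.1.1 q.2) (((gauss w).prod (gauss w)).prod P) :=
    integrable_of_nonneg_of_le (by fun_prop) (fun _ => lossLin_nonneg _ _)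
      (fun _ => lossLin_le_one _ _)
  have hint₂ : Integrable (fun q : ((Fin d → ℝ) × (Fin d → ℝ)) × ((Fin d → ℝ) × Bool) =>
      lossLin q.1.2 q.2) (((gauss w).prod (gauss w)).prod P) :=
    integrable_of_nonneg_of_le (by fun_prop) (fun _ => lossLin_nonneg _ _)
      (fun _ => lossLin_le_one _ _)
  rw [integral_add hint₁ hint₂, integral_prod _ hint₁, integral_prod _ hint₂,
    integral_fun_fst (fun u => ∫ z, lossLin u z ∂P),
    integral_fun_snd (fun u => ∫ z, lossLin u z ∂P)]
  simp only [probReal_univ, one_smul, two_mul]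
  rfl

lemma expDisagLin_map_fst_eq_integral :
    expDisagLin (P.map Prod.fst) w =
      ∫ q, l01 (hlin q.1.1 q.2.1) (hlin q.1.2 q.2.1) ∂((gauss w).prod (gauss w)).prod P := by
  rw [integral_prod _ (integrable_l01_hlin_hlin _)]
  refine integral_congr_ae (ae_of_all _ fun p => ?_)
  exact integral_map measurable_fst.aemeasurable (by fun_prop)

lemma jointErrLin_eq_integral :
    jointErrLin P w =
      ∫ q, lossLin q.1.1 q.2 * lossLin q.1.2 q.2 ∂((gauss w).prod (gauss w)).prod P := by
  rw [integral_prod _ (integrable_prod_lossLin_mul_lossLin _)]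
  rfl

theorem two_mul_gibbsLin_eq_expDisagLin_add :
    2 * gibbsLin P w = expDisagLin (P.map Prod.fst) w + 2 * jointErrLin P w := by
  rw [two_mul_gibbsLin_eq_integral, expDisagLin_map_fst_eq_integral, jointErrLin_eq_integral,
    ← integral_const_mul, ← integral_add (integrable_l01_hlin_hlin _)
      ((integrable_prod_lossLin_mul_lossLin _).const_mul 2)]
  exact integral_congr_ae (ae_of_all _ fun q => l01_add_l01 _ _ _)

end GibbsDecomposition

theorem integral_le_integral_singularPart_add_essSup_rnDeriv_mul {α : Type*}
    [MeasurableSpace α] {S T : Measure α} [T.HaveLebesgueDecomposition S] {f : α → ℝ}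
    (hf : 0 ≤ f) (hfT : Integrable f T) (hfS : Integrable f S)
    (hβ : essSup (T.rnDeriv S) S ≠ ⊤) :
    ∫ x, f x ∂T ≤
      ∫ x, f x ∂(T.singularPart S) + (essSup (T.rnDeriv S) S).toReal * ∫ x, f x ∂S := by
  have hdensity : S.withDensity (T.rnDeriv S) ≤ essSup (T.rnDeriv S) S • S :=
    calc S.withDensity (T.rnDeriv S) ≤ S.withDensity fun _ => essSup (T.rnDeriv S) S :=
          withDensity_mono (ENNReal.ae_le_essSup _)
      _ = essSup (T.rnDeriv S) S • S := withDensity_const _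
  calc ∫ x, f x ∂T
      = ∫ x, f x ∂(T.singularPart S) + ∫ x, f x ∂(S.withDensity (T.rnDeriv S)) := by
        conv_lhs => rw [T.haveLebesgueDecomposition_add S]
        exact integral_add_measure (hfT.mono_measure (T.singularPart_le S))
          (hfT.mono_measure (T.withDensity_rnDeriv_le S))
    _ ≤ ∫ x, f x ∂(T.singularPart S) + ∫ x, f x ∂(essSup (T.rnDeriv S) S • S) :=
        add_le_add_right
          (integral_mono_measure hdensity (ae_of_all _ hf) (hfS.smul_measure hβ)) _
    _ = _ := by rw [integral_smul_measure, smul_eq_mul]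

lemma integral_lossLin_singularPart_le_etaTS (S T : Measure ((Fin d → ℝ) × Bool))
    [IsFiniteMeasure T] (u : Fin d → ℝ) :
    ∫ z, lossLin u z ∂(T.singularPart S) ≤ etaTS S T := by
  refine le_ciSup (f := fun u => ∫ z, lossLin u z ∂(T.singularPart S))
    ⟨(T.singularPart S).real Set.univ, ?_⟩ u
  rintro _ ⟨v, rfl⟩
  calc ∫ z, lossLin v z ∂(T.singularPart S) ≤ ∫ _, (1 : ℝ) ∂(T.singularPart S) :=
        integral_mono (integrable_lossLin _ v) (integrable_const 1) (lossLin_le_one v)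
    _ = (T.singularPart S).real Set.univ := by simp

theorem jointErrLin_le_etaTS_add_betaInf_mul (S T : Measure ((Fin d → ℝ) × Bool))
    [IsFiniteMeasure S] [IsFiniteMeasure T] (hβ : essSup (T.rnDeriv S) S ≠ ⊤) (w : Fin d → ℝ) :
    jointErrLin T w ≤ etaTS S T + betaInf S T * jointErrLin S w := by
  have : T.HaveLebesgueDecomposition S := Measure.haveLebesgueDecomposition_of_finiteMeasure
  have hpoint (p : (Fin d → ℝ) × (Fin d → ℝ)) : ∫ z, lossLin p.1 z * lossLin p.2 z ∂T ≤
      etaTS S T + betaInf S T * ∫ z, lossLin p.1 z * lossLin p.2 z ∂S := by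
    have hsingular : ∫ z, lossLin p.1 z * lossLin p.2 z ∂(T.singularPart S) ≤ etaTS S T :=
      (integral_mono (integrable_lossLin_mul_lossLin _ p.1 p.2) (integrable_lossLin _ p.1)
        fun z => mul_le_of_le_one_right (lossLin_nonneg _ _) (lossLin_le_one _ _)).trans
      (integral_lossLin_singularPart_le_etaTS S T p.1)
    exact (integral_le_integral_singularPart_add_essSup_rnDeriv_mul
      (fun z => mul_nonneg (lossLin_nonneg _ _) (lossLin_nonneg _ _))
      (integrable_lossLin_mul_lossLin T p.1 p.2)
      (integrable_lossLin_mul_lossLin S p.1 p.2) hβ).trans (add_le_add_left hsingular _)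
  have hintS : Integrable (fun p : (Fin d → ℝ) × (Fin d → ℝ) =>
      ∫ z, lossLin p.1 z * lossLin p.2 z ∂S) ((gauss w).prod (gauss w)) :=
    (integrable_prod_lossLin_mul_lossLin _).integral_prod_left
  calc jointErrLin T w
      ≤ ∫ p, (etaTS S T + betaInf S T * ∫ z, lossLin p.1 z * lossLin p.2 z ∂S)
          ∂(gauss w).prod (gauss w) :=
        integral_mono (integrable_prod_lossLin_mul_lossLin _).integral_prod_left
          ((integrable_const _).add (hintS.const_mul _)) hpoint
    _ = etaTS S T + betaInf S T * jointErrLin S w := by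
        rw [integral_add (integrable_const _) (hintS.const_mul _), integral_const,
          probReal_univ, one_smul, integral_const_mul]
        rfl

theorem second_da_bound_linear_general (d : ℕ)
    (S T : Measure ((Fin d → ℝ) × Bool)) [IsProbabilityMeasure S] [IsProbabilityMeasure T]
    (hβ : essSup (T.rnDeriv S) S ≠ ⊤)
    (w : Fin d → ℝ) :
    riskLin T w ≤ expDisagLin (T.map Prod.fst) w
      + 2 * betaInf S T * jointErrLin S w + 2 * etaTS S T := by
  have hjoint := jointErrLin_le_etaTS_add_betaInf_mul S T hβ w
  calc riskLin T w ≤ 2 * gibbsLin T w := riskLin_le_two_mul_gibbsLin T w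
    _ = expDisagLin (T.map Prod.fst) w + 2 * jointErrLin T w :=
      two_mul_gibbsLin_eq_expDisagLin_add T w
    _ ≤ _ := by linarith

/-- Corollary 4 (second domain adaptation bound specialized to linear classifiers): for any
source `S` and target `T` over `ℝ^d×{−1,+1}` whose marginals satisfy `x ≠ 0` a.s.
(with `β_∞` assumed finite), and for every `w ∈ ℝ^d`,
`R_T(h_w) ≤ d_{T_X}(ρ_w) + 2·β_∞·e_S(ρ_w) + 2·η_{T∖S}`. -/
theorem second_da_bound_linear (d : ℕ)
    (S T : Measure ((Fin d → ℝ) × Bool)) [IsProbabilityMeasure S] [IsProbabilityMeasure T]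
    (hS : ∀ᵐ z ∂S, z.1 ≠ 0) (hT : ∀ᵐ z ∂T, z.1 ≠ 0)
    (hβ : essSup (T.rnDeriv S) S ≠ ⊤)
    (w : Fin d → ℝ) :
    riskLin T w ≤ expDisagLin (T.map Prod.fst) w
      + 2 * betaInf S T * jointErrLin S w + 2 * etaTS S T :=
  second_da_bound_linear_general d S T hβ w

end
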